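/- arXiv:2009.10961 — 3 statements merged into one kernel-verified Lean document; each statement's English description precedes it below -/
import Mathlib

section
/- Let (a_k)_{k≥0} be an arbitrary sequence of formal Laurent series in ℂ((z⁻¹)), and define a ℂ-linear map A : ℂ[z] → ℂ((z⁻¹)) by A·p := Σ_{k=0}^{deg p} a_k·p^{(k)} (a finite sum, since p^{(k)} = 0 for k > deg p). Then A maps ℂ[z] into ℂ[z] if and only if every coefficient a_k is a polynomial in z. (Sato–Noumi lemma: an operator in 𝒟 = ℂ((z⁻¹))[[d/dz]] stabilizes H₊ = ℂ[z] if and only if it lies in 𝒟₊ = ℂ[z][[d/dz]].) -/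
noncomputable section

/-- `H = ℂ((z⁻¹))`: formal Laurent series in `u = z⁻¹`. -/
abbrev H : Type := LaurentSeries ℂ

/-- The coefficient of `z^k` of a Laurent series in `z⁻¹`. -/
def zc (f : H) (k : ℤ) : ℂ := f.coeff (-k)

/-- `deg_z f ≤ d`: all coefficients of `z^k` with `k > d` vanish. -/
def degLE (f : H) (d : ℤ) : Prop := ∀ k : ℤ, d < k → zc f k = 0

/-- The element `z` of `H`. -/
def zH : H := HahnSeries.single (-1 : ℤ) (1 : ℂ)

/-- Multiplication by `z` as a `ℂ`-linear endomorphism of `H`. -/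
def Mz : H →ₗ[ℂ] H where
  toFun f := zH * f
  map_add' f g := mul_add zH f g
  map_smul' c f := by
    simp only [RingHom.id_apply, ← HahnSeries.single_zero_mul_eq_smul]
    ring

/-- The derivative `d/dz` as a `ℂ`-linear endomorphism of `H`. -/
def Dz : H →ₗ[ℂ] H where
  toFun f :=
    { coeff := fun n => ((1 - n : ℤ) : ℂ) * f.coeff (n - 1)
      isPWO_support' := by
        refine Set.IsPWO.mono (Set.IsPWO.image_of_monotone f.isPWO_support'
          (f := fun m : ℤ => m + 1) (fun a b hab => by dsimp only; omega)) ?_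
        intro n hn
        simp only [Function.mem_support] at hn
        refine ⟨n - 1, ?_, by ring⟩
        intro h
        exact hn (by rw [h, mul_zero]) }
  map_add' f g := by
    ext n
    simp [HahnSeries.coeff_add, mul_add]
  map_smul' c f := by
    ext n
    simp [HahnSeries.coeff_smul]
    ring

/-- `H₊ = ℂ[z]`: series with no negative powers of `z`. -/
def Hplus : Submodule ℂ H where
  carrier := {f | ∀ k : ℤ, k < 0 → zc f k = 0}
  add_mem' := by
    intro f g hf hg k hk
    simp only [Set.mem_setOf_eq, zc, HahnSeries.coeff_add] at *
    rw [hf k hk, hg k hk, add_zero]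
  zero_mem' := by intro k hk; simp [zc]
  smul_mem' := by
    intro c f hf k hk
    simp only [Set.mem_setOf_eq, zc, HahnSeries.coeff_smul] at *
    rw [hf k hk, smul_zero]

/-- `H₋ = z⁻¹ℂ[[z⁻¹]]`: series with only negative powers of `z`. -/
def Hminus : Submodule ℂ H where
  carrier := {f | ∀ k : ℤ, 0 ≤ k → zc f k = 0}
  add_mem' := by
    intro f g hf hg k hk
    simp only [Set.mem_setOf_eq, zc, HahnSeries.coeff_add] at *
    rw [hf k hk, hg k hk, add_zero]
  zero_mem' := by intro k hk; simp [zc]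
  smul_mem' := by
    intro c f hf k hk
    simp only [Set.mem_setOf_eq, zc, HahnSeries.coeff_smul] at *
    rw [hf k hk, smul_zero]

/-- The projection `π₊ : H → H₊` discarding all negative powers of `z`. -/
def piPlus : H →ₗ[ℂ] H where
  toFun f :=
    { coeff := fun n => if 0 < n then 0 else f.coeff n
      isPWO_support' := by
        refine Set.IsPWO.mono f.isPWO_support' ?_
        intro n hn
        simp only [Function.mem_support] at hn
        by_cases h : 0 < n
        · exact absurd (if_pos h) hn
        · rw [if_neg h] at hn; exact hn }
  map_add' f g := by
    ext n
    by_cases h : 0 < n <;> simp [HahnSeries.coeff_add, h]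
  map_smul' c f := by
    ext n
    by_cases h : 0 < n <;> simp [HahnSeries.coeff_smul, h]

/-- The statement that `A` is the operator `Σ_{k≥0} a_k (d/dz)^k`, where all
`deg a_k ≤ e`: partial sums converge to `A f` coefficientwise. -/
def IsOp (a : ℕ → H) (e : ℤ) (A : H →ₗ[ℂ] H) : Prop :=
  (∀ k, degLE (a k) e) ∧
  ∀ (f : H) (d : ℤ), degLE f d → ∀ N : ℕ,
    degLE (A f - ∑ k ∈ Finset.range N, a k * ((Dz ^ k) f)) (d + e - N)

/-- The operator `A` stabilizes the subspace `W`. -/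
def Stab (A : H →ₗ[ℂ] H) (W : Submodule ℂ H) : Prop := ∀ f ∈ W, A f ∈ W

/-- The big cell of the Sato Grassmannian: `π₊` restricts to a bijection of `W` onto `ℂ[z]`. -/
def BigCell (W : Submodule ℂ H) : Prop :=
  Set.BijOn piPlus (W : Set H) (Hplus : Set H)

/-- The pair `(P, Q)` belongs to `Gr_𝒟`. -/
def GrD (P Q : H →ₗ[ℂ] H) : Prop :=
  (∃ a : ℕ → H, IsOp a (-2) (P - Dz)) ∧
  (∃ b : ℕ → H, IsOp b (-1) (Q - Mz)) ∧
  P ∘ₗ Q - Q ∘ₗ P = LinearMap.id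

/-!
Proof idea: `d/dz` lowers degrees, so every polynomial `p` is killed by a power of `d/dz`, and
`A p` is a finite sum of products of polynomials when all `a_k` are. Conversely, applying `A` to
`z^n` gives `Σ_{k<n} a_k · n!/(n-k)! · z^{n-k} + n! · a_n`; if `A z^n` and, by strong induction,
`a_0, …, a_{n-1}` are polynomials, then so is `a_n`.
-/

open HahnSeries

lemma Dz_coeff (f : H) (n : ℤ) : (Dz f).coeff n = ((1 - n : ℤ) : ℂ) * f.coeff (n - 1) := rfl

lemma mem_Hplus_iff {f : H} : f ∈ Hplus ↔ ∀ n : ℤ, 0 < n → f.coeff n = 0 :=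
  ⟨fun hf n hn => by simpa [zc] using hf (-n) (by omega), fun hf k hk => hf (-k) (by omega)⟩

lemma single_mem_Hplus {m : ℤ} (hm : m ≤ 0) (c : ℂ) : single m c ∈ Hplus :=
  mem_Hplus_iff.2 fun n hn => by rw [coeff_single, if_neg (by omega)]

lemma mul_mem_Hplus {f g : H} (hf : f ∈ Hplus) (hg : g ∈ Hplus) : f * g ∈ Hplus := by
  rw [mem_Hplus_iff] at *
  intro n hn
  rw [coeff_mul]
  refine Finset.sum_eq_zero fun ⟨i, j⟩ hij => ?_
  obtain ⟨hi, hj, rfl⟩ := Finset.mem_antidiagonal.1 hij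
  rcases lt_or_ge 0 i with hi' | hi'
  · exact absurd (hf i hi') hi
  · exact absurd (hg j (by omega)) hj

lemma Dz_mem_Hplus {f : H} (hf : f ∈ Hplus) : Dz f ∈ Hplus := by
  rw [mem_Hplus_iff] at *
  intro n hn
  rw [Dz_coeff]
  rcases eq_or_ne n 1 with rfl | hn1
  · norm_num
  · rw [hf (n - 1) (by omega), mul_zero]

lemma Dz_pow_mem_Hplus {f : H} (hf : f ∈ Hplus) (k : ℕ) : (Dz ^ k) f ∈ Hplus := by
  induction k with
  | zero => simpa using hf
  | succ k ih => rw [pow_succ', Module.End.mul_apply]; exact Dz_mem_Hplus ih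

lemma Dz_pow_coeff (k : ℕ) (f : H) (n : ℤ) :
    ((Dz ^ k) f).coeff n =
      (∏ i ∈ Finset.range k, (((i : ℤ) + 1 - n : ℤ) : ℂ)) * f.coeff (n - k) := by
  induction k generalizing f n with
  | zero => simp
  | succ k ih =>
    rw [pow_succ, Module.End.mul_apply, ih, Dz_coeff, Finset.prod_range_succ,
      show (1 - (n - k) : ℤ) = (k : ℤ) + 1 - n by omega,
      show (n - k - 1 : ℤ) = n - (k + 1 : ℕ) by push_cast; omega]
    ring

/-- The Hahn-series `order` of `f` is `-deg f`, so `N = 1 - order f` exceeds the degree of `f`. -/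
lemma exists_Dz_pow_eq_zero {f : H} (hf : f ∈ Hplus) : ∃ N : ℕ, (Dz ^ N) f = 0 := by
  refine ⟨(1 - f.order).toNat, ?_⟩
  ext n
  set N := (1 - f.order).toNat
  rw [Dz_pow_coeff, coeff_zero]
  by_cases hc : f.coeff (n - N) = 0
  · rw [hc, mul_zero]
  have h_order : f.order ≤ n - N := le_of_not_gt fun h => hc (coeff_eq_zero_of_lt_order h)
  have h_deg : n - N ≤ 0 := le_of_not_gt fun h => hc (mem_Hplus_iff.1 hf _ h)
  have hN : 1 - f.order ≤ N := Int.self_le_toNat _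
  have hmem : (n - 1).toNat ∈ Finset.range N := Finset.mem_range.2 (by omega)
  rw [Finset.prod_eq_zero hmem (by rw [Int.toNat_of_nonneg (by omega)]; norm_num), zero_mul]

lemma Dz_single (m : ℤ) (c : ℂ) :
    Dz (single m c) = single (m + 1) (((-m : ℤ) : ℂ) * c) := by
  ext n
  rw [Dz_coeff, coeff_single, coeff_single]
  by_cases h : n = m + 1
  · rw [if_pos (by omega), if_pos h, show (1 - n : ℤ) = -m by omega]
  · rw [if_neg (by omega), if_neg h, mul_zero]

lemma natCast_sub_mul_descFactorial (n k : ℕ) :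
    ((n : ℂ) - k) * n.descFactorial k = n.descFactorial (k + 1) := by
  rw [Nat.descFactorial_succ]
  rcases le_or_gt k n with hk | hk
  · push_cast [hk]; ring
  · rw [Nat.descFactorial_eq_zero_iff_lt.2 hk]; simp

/-- Since `z^n = single (-n) 1`, this is `(d/dz)^k z^n = n!/(n-k)! · z^(n-k)`. -/
lemma Dz_pow_single_neg_natCast (n k : ℕ) (c : ℂ) :
    (Dz ^ k) (single (-n : ℤ) c) = single ((k : ℤ) - n) (n.descFactorial k * c) := by
  induction k with
  | zero => simp
  | succ k ih =>
    rw [pow_succ', Module.End.mul_apply, ih, Dz_single, ← mul_assoc,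
      ← natCast_sub_mul_descFactorial]
    push_cast
    ring_nf

lemma apply_single_neg_natCast (a : ℕ → H) (A : H → H)
    (hA : ∀ p ∈ Hplus, ∀ N : ℕ, (Dz ^ N) p = 0 →
      A p = ∑ k ∈ Finset.range N, a k * ((Dz ^ k) p)) (n : ℕ) :
    A (single (-n : ℤ) 1) = ∑ k ∈ Finset.range n, a k * (Dz ^ k) (single (-n : ℤ) 1)
      + (n.factorial : ℂ) • a n := by
  have hkill : (Dz ^ (n + 1)) (single (-n : ℤ) 1) = 0 := by
    rw [Dz_pow_single_neg_natCast, Nat.descFactorial_eq_zero_iff_lt.2 (Nat.lt_succ_self n)]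
    simp
  rw [hA _ (single_mem_Hplus (by omega) 1) _ hkill, Finset.sum_range_succ,
    Dz_pow_single_neg_natCast, Nat.descFactorial_self, sub_self, mul_comm (a n),
    single_zero_mul_eq_smul, mul_one]

/-- **Sato–Noumi lemma.** The operator `A·p = Σ_{k=0}^{deg p} a_k p^{(k)}`
maps `ℂ[z]` into `ℂ[z]` if and only if every coefficient `a_k` is a polynomial in `z`. -/
theorem sato_noumi (a : ℕ → H) (A : H → H)
    (hA : ∀ p ∈ Hplus, ∀ N : ℕ, (Dz ^ N) p = 0 →
      A p = ∑ k ∈ Finset.range N, a k * ((Dz ^ k) p)) :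
    (∀ p ∈ Hplus, A p ∈ Hplus) ↔ (∀ k, a k ∈ Hplus) := by
  constructor
  · intro hstab n
    induction n using Nat.strong_induction_on with
    | _ n ih =>
      have hlower : ∑ k ∈ Finset.range n, a k * (Dz ^ k) (single (-n : ℤ) 1) ∈ Hplus :=
        Submodule.sum_mem _ fun k hk => mul_mem_Hplus (ih k (Finset.mem_range.1 hk))
          (Dz_pow_mem_Hplus (single_mem_Hplus (by omega) 1) k)
      have htop : (n.factorial : ℂ) • a n ∈ Hplus := by
        rw [eq_sub_of_add_eq' (apply_single_neg_natCast a A hA n).symm]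
        exact Hplus.sub_mem (hstab _ (single_mem_Hplus (by omega) 1)) hlower
      exact (Hplus.smul_mem_iff (by exact_mod_cast n.factorial_ne_zero)).1 htop
  · intro ha p hp
    obtain ⟨N, hN⟩ := exists_Dz_pow_eq_zero hp
    rw [hA p hp N hN]
    exact Submodule.sum_mem _ fun k _ => mul_mem_Hplus (ha k) (Dz_pow_mem_Hplus hp k)
end
end

section
/- Let P = d/dz + Σ_{k≥0} a_k·(d/dz)^k be an endomorphism of H = ℂ((z⁻¹)), where each a_k ∈ ℂ((z⁻¹)) has deg a_k ≤ −2. Then there exists a unique Ψ ∈ 1 + z⁻¹ℂ[[z⁻¹]] with P·Ψ = 0, and every solution of P·Ψ = 0 in ℂ((z⁻¹)) is a complex scalar multiple of this Ψ. In particular, the quantum spectral curve equation P·Ψ = 0 has a unique monic solution (leading coefficient equal to 1), and it is of the form 1 + O(z⁻¹). -/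
/-! Write `P = d/dz + A`, where `A` lowers the degree in `z` by at least two. If `deg f ≤ d`, the
coefficient of `z^(d-1)` in `P f` is `d` times the coefficient of `z^d` in `f`. Hence a solution of
`P Ψ = 0` vanishing in degree `0` vanishes in every degree, so solutions are determined by their
constant term; and the solution with constant term `1` is built one coefficient at a time, the
coefficient of `z^(-n-1)` being forced by the equation in degree `-n-2`, where it enters with the
factor `-(n+1)` and otherwise only coefficients of higher degree contribute. -/

noncomputable section

/-- `f` is monic: its leading coefficient equals `1`. -/
def IsMonic (f : H) : Prop := ∃ d : ℤ, degLE f d ∧ zc f d = 1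

lemma zc_zero (k : ℤ) : zc 0 k = 0 := rfl

lemma zc_add (f g : H) (k : ℤ) : zc (f + g) k = zc f k + zc g k :=
  HahnSeries.coeff_add ..

lemma zc_sub (f g : H) (k : ℤ) : zc (f - g) k = zc f k - zc g k :=
  HahnSeries.coeff_sub ..

lemma zc_smul (c : ℂ) (f : H) (k : ℤ) : zc (c • f) k = c * zc f k :=
  HahnSeries.coeff_smul ..

lemma zc_one (k : ℤ) : zc 1 k = if k = 0 then 1 else 0 := by
  simp [zc, HahnSeries.coeff_one]

lemma zc_single (j : ℤ) (c : ℂ) (k : ℤ) :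
    zc (HahnSeries.single j c) k = if k = -j then c else 0 := by
  simp only [zc, HahnSeries.coeff_single, neg_eq_iff_eq_neg]

lemma zc_Dz (f : H) (k : ℤ) : zc (Dz f) k = (k + 1 : ℂ) * zc f (k + 1) := by
  change ((1 - -k : ℤ) : ℂ) * f.coeff (-k - 1) = _
  rw [zc, neg_add', sub_neg_eq_add, add_comm 1 k]
  push_cast
  rfl

lemma ext_zc {f g : H} (h : ∀ k, zc f k = zc g k) : f = g :=
  HahnSeries.ext <| funext fun n => by simpa [zc] using h (-n)

namespace degLE

variable {f : H} {d : ℤ}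

lemma mono (h : degLE f d) {e : ℤ} (hde : d ≤ e) : degLE f e :=
  fun k hk => h k (hde.trans_lt hk)

lemma sub_one (h : degLE f d) (h0 : zc f d = 0) : degLE f (d - 1) := by
  intro k hk
  obtain rfl | hkd := eq_or_ne k d
  · exact h0
  · exact h k (by omega)

lemma of_forall_zc_eq_zero (hd : degLE f d) {e : ℤ}
    (h : ∀ k, e < k → degLE f k → zc f k = 0) : degLE f e := by
  have key : ∀ n ≤ d, degLE f (max e n) := by
    intro n hn
    induction n, hn using Int.leInductionDown with
    | base => exact hd.mono (le_max_right e d)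
    | pred n _ ih =>
      rcases le_or_gt n e with hne | hen
      · rwa [max_eq_left (by omega : n - 1 ≤ e), ← max_eq_left hne]
      · rw [max_eq_right hen.le] at ih
        exact (ih.sub_one (h n hen ih)).mono (le_max_right _ _)
  rcases le_total e d with hed | hde
  · simpa using key e hed
  · exact hd.mono hde

end degLE

lemma exists_degLE (f : H) : ∃ d, degLE f d :=
  ⟨-f.order, fun _ hk => HahnSeries.coeff_eq_zero_of_lt_order (by omega)⟩

lemma sub_one_mem_Hminus_iff {f : H} : f - 1 ∈ Hminus ↔ degLE f 0 ∧ zc f 0 = 1 := by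
  change (∀ k : ℤ, 0 ≤ k → zc (f - 1) k = 0) ↔ _
  simp only [zc_sub, zc_one, sub_eq_zero]
  refine ⟨fun h => ⟨fun k hk => ?_, by simpa using h 0 le_rfl⟩, fun ⟨hf, h0⟩ k hk => ?_⟩
  · simpa [hk.ne'] using h k hk.le
  · obtain rfl | hk := hk.eq_or_lt
    · simpa using h0
    · simpa [hk.ne'] using hf k hk

def LowersDegBy (A : H →ₗ[ℂ] H) (s : ℤ) : Prop := ∀ f d, degLE f d → degLE (A f) (d - s)

lemma IsOp.lowersDegBy {a : ℕ → H} {e : ℤ} {A : H →ₗ[ℂ] H} (h : IsOp a e A) :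
    LowersDegBy A (-e) := fun f d hf => by
  simpa [sub_neg_eq_add] using h.2 f d hf 0

section Kernel

variable {P : H →ₗ[ℂ] H}

lemma zc_eq_zero_of_apply_eq_zero (hP : LowersDegBy (P - Dz) 2) {f : H} (hf : P f = 0)
    {d : ℤ} (hd : degLE f d) (hd0 : d ≠ 0) : zc f d = 0 := by
  have h : zc (Dz f + (P - Dz) f) (d - 1) = 0 := by
    rw [LinearMap.sub_apply, add_sub_cancel, hf, zc_zero]
  rw [zc_add, zc_Dz, hP f d hd (d - 1) (by omega), add_zero, sub_add_cancel] at h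
  have hd' : ((d - 1 : ℤ) : ℂ) + 1 ≠ 0 := by simpa using hd0
  exact (mul_eq_zero.mp h).resolve_left hd'

lemma eq_zero_of_apply_eq_zero (hP : LowersDegBy (P - Dz) 2) {f : H} (hf : P f = 0)
    (h0 : zc f 0 = 0) : f = 0 := by
  obtain ⟨d, hd⟩ := exists_degLE f
  refine ext_zc fun m => ?_
  have hdeg : degLE f (min m 0 - 1) := hd.of_forall_zc_eq_zero fun k _ hk => by
    obtain rfl | hk0 := eq_or_ne k 0
    exacts [h0, zc_eq_zero_of_apply_eq_zero hP hf hk hk0]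
  exact hdeg m (by omega)

lemma eq_smul_of_apply_eq_zero (hP : LowersDegBy (P - Dz) 2) {Ψ Φ : H} (hΨ : P Ψ = 0)
    (hΨ0 : zc Ψ 0 = 1) (hΦ : P Φ = 0) : Φ = zc Φ 0 • Ψ := by
  refine sub_eq_zero.mp (eq_zero_of_apply_eq_zero hP ?_ ?_)
  · rw [map_sub, map_smul, hΦ, hΨ, smul_zero, sub_zero]
  · rw [zc_sub, zc_smul, hΨ0, mul_one, sub_self]

end Kernel

lemma eq_one_of_isMonic_smul {Ψ : H} (hΨ : degLE Ψ 0) (hΨ0 : zc Ψ 0 = 1) {c : ℂ}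
    (h : IsMonic (c • Ψ)) : c = 1 := by
  obtain ⟨d, hd, hd1⟩ := h
  rw [zc_smul] at hd1
  rcases lt_trichotomy d 0 with hlt | rfl | hgt
  · have hc : c = 0 := by simpa [zc_smul, hΨ0] using hd 0 hlt
    simp [hc] at hd1
  · simpa [hΨ0] using hd1
  · simp [hΨ d hgt] at hd1

section Existence

variable (A : H →ₗ[ℂ] H)

/-- The solution of `(Dz + A) Ψ = 0` with `Ψ = 1 + O(z⁻¹)`, truncated after `z^(-n)`: the next
coefficient is the unique one that cancels the coefficient of `z^(-n-2)` in the equation. -/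
def approxSol : ℕ → H
  | 0 => 1
  | n + 1 => approxSol n +
      (zc (A (approxSol n)) (-n - 2) / (n + 1)) • HahnSeries.single ((n : ℤ) + 1) 1

lemma zc_approxSol_of_pos (n : ℕ) {k : ℤ} (hk : 0 < k) : zc (approxSol A n) k = 0 := by
  induction n with
  | zero => simp [approxSol, zc_one, hk.ne']
  | succ n ih => simp only [approxSol, zc_add, zc_smul, zc_single, ih]; simp; omega

lemma zc_approxSol_of_lt (n : ℕ) {k : ℤ} (hk : k < -n) : zc (approxSol A n) k = 0 := by
  induction n generalizing k with
  | zero => simp [approxSol, zc_one]; omega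
  | succ n ih =>
    simp only [approxSol, zc_add, zc_smul, zc_single, ih (by omega : k < -n)]
    simp; omega

lemma zc_approxSol_of_le {n m : ℕ} (h : n ≤ m) :
    zc (approxSol A m) (-n) = zc (approxSol A n) (-n) := by
  induction m, h using Nat.le_induction with
  | base => rfl
  | succ m _ ih => simp only [approxSol, zc_add, zc_smul, zc_single, ih]; simp; omega

lemma zc_approxSol_succ (n : ℕ) :
    zc (approxSol A (n + 1)) (-(n + 1 : ℕ)) = zc (A (approxSol A n)) (-n - 2) / (n + 1) := by
  rw [approxSol, zc_add, zc_smul, zc_single, zc_approxSol_of_lt A n (by omega),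
    if_pos (by push_cast; ring), zero_add, mul_one]

def sol : H := HahnSeries.ofPowerSeries ℤ ℂ (PowerSeries.mk fun n => zc (approxSol A n) (-n))

lemma zc_sol_neg_natCast (n : ℕ) : zc (sol A) (-n) = zc (approxSol A n) (-n) := by
  rw [zc, neg_neg, sol, HahnSeries.ofPowerSeries_apply_coeff, PowerSeries.coeff_mk]

lemma degLE_sol : degLE (sol A) 0 := fun k hk => by
  rw [zc, sol, PowerSeries.coeff_coe, if_pos (by omega)]

lemma zc_sol_zero : zc (sol A) 0 = 1 := by
  simpa [approxSol, zc_one] using zc_sol_neg_natCast A 0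

lemma degLE_sol_sub_approxSol (n : ℕ) : degLE (sol A - approxSol A n) (-n - 1) := by
  intro k hk
  rw [zc_sub, sub_eq_zero]
  rcases lt_or_ge 0 k with hk0 | hk0
  · rw [degLE_sol A k hk0, zc_approxSol_of_pos A n hk0]
  · obtain ⟨j, rfl⟩ : ∃ j : ℕ, k = -j := ⟨k.natAbs, by omega⟩
    rw [zc_sol_neg_natCast, zc_approxSol_of_le A (by omega : j ≤ n)]

end Existence

lemma apply_sol_eq_zero {P : H →ₗ[ℂ] H} (hP : LowersDegBy (P - Dz) 2) : P (sol (P - Dz)) = 0 := by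
  set A := P - Dz
  refine ext_zc fun k => ?_
  rw [show P = Dz + A from (add_sub_cancel Dz P).symm, LinearMap.add_apply, zc_add, zc_Dz,
    zc_zero]
  rcases le_or_gt (-1) k with hk | hk
  · rw [hP _ 0 (degLE_sol A) k (by omega), add_zero, mul_eq_zero]
    rcases hk.eq_or_lt with rfl | hk
    · left; push_cast; ring
    · exact Or.inr (degLE_sol A (k + 1) (by omega))
  · obtain ⟨n, rfl⟩ : ∃ n : ℕ, k = -n - 2 := ⟨(-k - 2).toNat, by omega⟩
    have hAk : zc (A (sol A)) (-n - 2) = zc (A (approxSol A n)) (-n - 2) := by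
      have := hP _ _ (degLE_sol_sub_approxSol A n) (-n - 2) (by omega)
      rwa [map_sub, zc_sub, sub_eq_zero] at this
    rw [show (-n - 2 : ℤ) + 1 = -(n + 1 : ℕ) by push_cast; ring, zc_sol_neg_natCast,
      zc_approxSol_succ, hAk]
    push_cast
    field_simp
    ring

/-- The quantum spectral curve equation `P · Ψ = 0` with
`P = d/dz + Σ a_k (d/dz)^k`, `deg a_k ≤ -2`, has a unique solution in `1 + z⁻¹ℂ[[z⁻¹]]`;
every solution is a scalar multiple of it, and it is the unique monic solution. -/
theorem quantum_spectral_curve_unique_solution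
    (P : H →ₗ[ℂ] H) (a : ℕ → H) (hP : IsOp a (-2) (P - Dz)) :
    ∃ Ψ : H, (Ψ - 1 ∈ Hminus ∧ P Ψ = 0) ∧
      (∀ Φ : H, Φ - 1 ∈ Hminus ∧ P Φ = 0 → Φ = Ψ) ∧
      (∀ Φ : H, P Φ = 0 → ∃ c : ℂ, Φ = c • Ψ) ∧
      IsMonic Ψ ∧
      (∀ Φ : H, P Φ = 0 → IsMonic Φ → Φ = Ψ) := by
  have hP₂ : LowersDegBy (P - Dz) 2 := by simpa using hP.lowersDegBy
  set Ψ := sol (P - Dz)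
  have hΨ : P Ψ = 0 := apply_sol_eq_zero hP₂
  have hΨdeg : degLE Ψ 0 := degLE_sol _
  have hΨ0 : zc Ψ 0 = 1 := zc_sol_zero _
  have hscal (Φ : H) (hΦ : P Φ = 0) : Φ = zc Φ 0 • Ψ :=
    eq_smul_of_apply_eq_zero hP₂ hΨ hΨ0 hΦ
  refine ⟨Ψ, ⟨sub_one_mem_Hminus_iff.2 ⟨hΨdeg, hΨ0⟩, hΨ⟩, ?_, fun Φ hΦ => ⟨_, hscal Φ hΦ⟩,
    ⟨0, hΨdeg, hΨ0⟩, ?_⟩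
  · rintro Φ ⟨hΦ1, hΦ⟩
    rw [hscal Φ hΦ, (sub_one_mem_Hminus_iff.1 hΦ1).2, one_smul]
  · intro Φ hΦ hmonic
    rw [hscal Φ hΦ] at hmonic ⊢
    rw [eq_one_of_isMonic_smul hΨdeg hΨ0 hmonic, one_smul]
end
end

section
/- Let n ≥ 1 be an integer and w₁, …, w_{n+1} ∈ ℂ. In the ring of formal power series ℂ[[z]], the coefficient of z^{n+1} in the series ∏_{k=1}^{n+1}(1 − w_k z) · ( n + Σ_{k=1}^{n+1} w_k z/(1 − w_k z) )² equals ∏_{k=1}^{n+1}(−w_k) + Σ_{k=1}^{n+1} w_k · ∏_{j≠k}(w_k − w_j). Equivalently, for V''(z) := z^n/∏_{k=1}^{n+1}(1 − w_k z), the residue at z = 0 (the coefficient of z⁻¹ in the Laurent expansion at 0) of (V'''(z))²/(V''(z))³ equals this value, so that the constant θ₋₁ := −(1/24)·res_{z=0}[(V''')²/(V'')³] appearing in the string equation of the deformed generalized Kontsevich model is θ₋₁ = −(1/24)·(∏_{k=1}^{n+1}(−w_k) + Σ_{k=1}^{n+1} w_k ∏_{j≠k}(w_k − w_j)). -/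
/-!
Write `g_k = 1/(1 - w_k z)`, so that `w_k z g_k = g_k - 1` and the bracket is `∑_k g_k - 1`.
With `P = ∏_k (1 - w_k z)` and `Q_k = P g_k = ∏_{j ≠ k} (1 - w_j z)`, the series becomes
`∑_{k,l} Q_k g_l - 2 ∑_k Q_k + P`. The `Q_k` are polynomials of degree `n`, and the coefficient
of `z^N` in `∏_{j ∈ s} (1 - w_j z) · 1/(1 - v z)` is `v^(N - |s|) ∏_{j ∈ s} (v - w_j)` once
`N ≥ |s|`. Hence only `P` and the diagonal terms `Q_k g_k` contribute to the coefficient of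
`z^{n+1}`: the off-diagonal ones contain the factor `w_l - w_l`.
-/

open PowerSeries

namespace PowerSeries

variable {R : Type*} [CommRing R]

theorem coeff_succ_one_sub_C_mul_X_mul (a : R) (f : R⟦X⟧) (N : ℕ) :
    coeff (N + 1) ((1 - C a * X) * f) = coeff (N + 1) f - a * coeff N f := by
  rw [sub_mul, one_mul, mul_assoc, map_sub, coeff_C_mul, coeff_succ_X_mul]

theorem one_sub_C_mul_X_mul_mk_pow (a : R) : (1 - C a * X) * mk (a ^ ·) = 1 := by
  have h := congrArg (rescale a) (mk_one_mul_one_sub_eq_one R)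
  rw [map_mul, map_sub, map_one, rescale_X, rescale_mk] at h
  simpa [mul_comm] using h

theorem C_mul_X_mul_mk_pow (a : R) : C a * X * mk (a ^ ·) = mk (a ^ ·) - 1 := by
  linear_combination -one_sub_C_mul_X_mul_mk_pow a

theorem sum_C_mul_X_mul_mk_pow {ι : Type*} (w : ι → R) (s : Finset ι) :
    ∑ k ∈ s, C (w k) * X * mk (w k ^ ·) = ∑ k ∈ s, mk (w k ^ ·) - s.card := by
  simp [C_mul_X_mul_mk_pow, Finset.sum_sub_distrib]

theorem mk_zero_pow : (mk (0 ^ ·) : R⟦X⟧) = 1 := by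
  ext n
  simp [coeff_one, zero_pow_eq]

theorem prod_one_sub_C_mul_X_mul_mk_pow {ι : Type*} [DecidableEq ι] (w : ι → R) {s : Finset ι}
    {k : ι} (hk : k ∈ s) :
    (∏ j ∈ s, (1 - C (w j) * X)) * mk (w k ^ ·) = ∏ j ∈ s.erase k, (1 - C (w j) * X) := by
  rw [← Finset.prod_erase_mul _ _ hk, mul_assoc, one_sub_C_mul_X_mul_mk_pow, mul_one]

theorem coeff_prod_one_sub_C_mul_X_mul_mk_pow {ι : Type*} [DecidableEq ι] (w : ι → R) (v : R)
    (s : Finset ι) {N : ℕ} (hN : s.card ≤ N) :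
    coeff N ((∏ j ∈ s, (1 - C (w j) * X)) * mk (v ^ ·)) =
      v ^ (N - s.card) * ∏ j ∈ s, (v - w j) := by
  induction s using Finset.induction_on generalizing N with
  | empty => simp
  | insert a s ha ih =>
    rw [Finset.card_insert_of_notMem ha] at hN ⊢
    obtain ⟨M, rfl⟩ : ∃ M, N = M + 1 := ⟨N - 1, by omega⟩
    rw [Finset.prod_insert ha, mul_assoc, coeff_succ_one_sub_C_mul_X_mul, ih (by omega),
      ih (by omega), Finset.prod_insert ha, show M + 1 - s.card = M - s.card + 1 by omega,
      Nat.add_sub_add_right, pow_succ]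
    ring

theorem coeff_prod_one_sub_C_mul_X {ι : Type*} [DecidableEq ι] (w : ι → R) (s : Finset ι)
    {N : ℕ} (hN : s.card ≤ N) :
    coeff N (∏ j ∈ s, (1 - C (w j) * X)) = 0 ^ (N - s.card) * ∏ j ∈ s, (-w j) := by
  simpa [mk_zero_pow] using coeff_prod_one_sub_C_mul_X_mul_mk_pow w 0 s hN

end PowerSeries

theorem Finset.sum_mul_prod_erase_sub {ι R : Type*} [DecidableEq ι] [CommRing R] (f w : ι → R)
    {s : Finset ι} {k : ι} (hk : k ∈ s) :
    ∑ l ∈ s, f l * ∏ j ∈ s.erase k, (w l - w j) = f k * ∏ j ∈ s.erase k, (w k - w j) := by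
  refine Finset.sum_eq_single_of_mem k hk fun l hl hlk => ?_
  rw [Finset.prod_eq_zero (Finset.mem_erase.2 ⟨hlk, hl⟩) (sub_self _), mul_zero]

theorem residue_theta_minus_one_general (n : ℕ) (w : Fin (n + 1) → ℂ) :
    PowerSeries.coeff (n + 1)
      ((∏ k, (1 - PowerSeries.C (w k) * PowerSeries.X)) *
        ((n : PowerSeries ℂ) +
          ∑ k, PowerSeries.C (w k) * PowerSeries.X *
            PowerSeries.mk fun m => w k ^ m) ^ 2) =
      (∏ k, (-(w k))) + ∑ k, w k * ∏ j ∈ Finset.univ.erase k, (w k - w j) := by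
  set P : ℂ⟦X⟧ := ∏ k, (1 - C (w k) * X)
  set g : Fin (n + 1) → ℂ⟦X⟧ := fun k => mk fun m => w k ^ m
  set Q : Fin (n + 1) → ℂ⟦X⟧ := fun k => ∏ j ∈ Finset.univ.erase k, (1 - C (w j) * X)
  have hcard (k : Fin (n + 1)) : (Finset.univ.erase k).card = n := by simp
  have hbracket : (n : ℂ⟦X⟧) + ∑ k, C (w k) * X * g k = ∑ k, g k - 1 := by
    rw [sum_C_mul_X_mul_mk_pow, Finset.card_univ, Fintype.card_fin]
    push_cast
    ring
  have hPg (k : Fin (n + 1)) : P * g k = Q k :=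
    prod_one_sub_C_mul_X_mul_mk_pow w (Finset.mem_univ k)
  have hexpand : P * (∑ k, g k - 1) ^ 2 = ∑ k, ∑ l, Q k * g l - ∑ k, Q k - ∑ k, Q k + P := by
    simp only [← hPg, ← Finset.mul_sum, ← Finset.sum_mul]
    ring
  have hQg (k l : Fin (n + 1)) :
      coeff (n + 1) (Q k * g l) = w l * ∏ j ∈ Finset.univ.erase k, (w l - w j) := by
    rw [coeff_prod_one_sub_C_mul_X_mul_mk_pow w (w l) _ (by rw [hcard]; omega), hcard,
      Nat.add_sub_cancel_left, pow_one]
  have hQ (k : Fin (n + 1)) : coeff (n + 1) (Q k) = 0 := by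
    rw [coeff_prod_one_sub_C_mul_X w _ (by rw [hcard]; omega), hcard]
    simp
  have hP : coeff (n + 1) P = ∏ k, (-(w k)) := by
    rw [coeff_prod_one_sub_C_mul_X _ _ (by simp)]
    simp
  rw [hbracket, hexpand, map_add, map_sub, map_sub, hP]
  simp only [map_sum, hQg, hQ, Finset.sum_const_zero, sub_zero,
    Finset.sum_mul_prod_erase_sub _ _ (Finset.mem_univ _)]
  ring

/-- The coefficient of `z^{n+1}` in
`∏_{k}(1 - w_k z)·(n + Σ_k w_k z/(1 - w_k z))²` equals
`∏_k(-w_k) + Σ_k w_k ∏_{j≠k}(w_k - w_j)`; this computes the constant `θ₋₁` in the string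
equation of the deformed generalized Kontsevich model. -/
theorem residue_theta_minus_one (n : ℕ) (hn : 1 ≤ n) (w : Fin (n + 1) → ℂ) :
    PowerSeries.coeff (n + 1)
      ((∏ k, (1 - PowerSeries.C (w k) * PowerSeries.X)) *
        ((n : PowerSeries ℂ) +
          ∑ k, PowerSeries.C (w k) * PowerSeries.X *
            PowerSeries.mk fun m => w k ^ m) ^ 2) =
      (∏ k, (-(w k))) + ∑ k, w k * ∏ j ∈ Finset.univ.erase k, (w k - w j) :=
  residue_theta_minus_one_general n w
end
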